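/- For all integers k ≥ 2 and d ≥ 2 there exists a finite connected simple graph G with diam(G) = d, sg(G) = k, and n(G) = k + (d − 1)·C(k,2) vertices, attaining equality in the bound sg(G) ≥ ⌈(d − 3 + √((d−3)² + 8·n(G)·(d−1)))/(2(d−1))⌉. -/

import Mathlib

open SimpleGraph

/-- `S` is a strong geodetic set of `G` if one can fix, for each pair of vertices of `S`,
a geodesic (shortest path) between them, so that every vertex of `G` lies on one of the
chosen geodesics. -/
def SimpleGraph.IsStrongGeodeticSet {V : Type*} (G : SimpleGraph V) (S : Set V) : Prop :=
  ∃ g : ∀ x ∈ S, ∀ y ∈ S, G.Walk x y,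
    (∀ x hx y hy, (g x hx y hy).length = G.dist x y) ∧
    ∀ v : V, ∃ x hx y hy, v ∈ (g x hx y hy).support

/-- The strong geodetic number of a graph: the minimum cardinality of a strong geodetic set. -/
noncomputable def SimpleGraph.strongGeodeticNumber {V : Type*} [Fintype V]
    (G : SimpleGraph V) : ℕ :=
  sInf {n | ∃ S : Finset V, G.IsStrongGeodeticSet ↑S ∧ S.card = n}

/-!
Take `k` terminals and join every two of them by a path of length `d`; then join all middle
vertices of these paths to each other, and make the neighbourhood of each terminal a clique.
Through the middle vertices any two vertices are within distance `d`, while a potential that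
changes by at most one along an edge keeps distinct terminals at distance exactly `d`; so the
diameter is `d`. A vertex whose neighbourhood is a clique is never interior to a geodesic, so
every strong geodetic set contains all terminals; conversely the terminals, with the paths
between them as geodesics, form a strong geodetic set, so `sg = k`. For
`n = k + (d - 1) C(k, 2)` the discriminant in the bound is the perfect square
`(2 (d - 1) k - (d - 3))²`, so the bound equals `k`.
-/
namespace SimpleGraph

variable {V : Type*} {G : SimpleGraph V}

theorem exists_walk_of_adj_succ (f : ℕ → V) (n : ℕ)
    (hf : ∀ t < n, G.Adj (f t) (f (t + 1))) :
    ∃ w : G.Walk (f 0) (f n), w.length = n ∧ ∀ t ≤ n, f t ∈ w.support := by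
  induction n with
  | zero => exact ⟨.nil, rfl, fun t ht => by simp [Nat.le_zero.1 ht]⟩
  | succ n ih =>
    obtain ⟨w, hlen, hsupp⟩ := ih fun t ht => hf t (by omega)
    refine ⟨w.concat (hf n n.lt_succ_self), by simp [hlen], fun t ht => ?_⟩
    rw [Walk.support_concat, List.mem_append, List.mem_singleton]
    rcases Nat.lt_or_ge t (n + 1) with h | h
    · exact Or.inl (hsupp t (by omega))
    · exact Or.inr (by rw [show t = n + 1 by omega])

theorem Walk.le_add_length_of_forall_adj {f : V → ℕ}
    (hf : ∀ ⦃x y⦄, G.Adj x y → f y ≤ f x + 1) {x y : V} (w : G.Walk x y) :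
    f y ≤ f x + w.length := by
  induction w with
  | nil => simp
  | cons h _ ih => have := hf h; rw [Walk.length_cons]; omega

theorem le_edist_of_forall_adj {f : V → ℕ} (hf : ∀ ⦃x y⦄, G.Adj x y → f y ≤ f x + 1)
    (x y : V) : ((f y - f x : ℕ) : ℕ∞) ≤ G.edist x y := by
  refine le_sInf ?_
  rintro _ ⟨w, rfl⟩
  have := w.le_add_length_of_forall_adj hf
  exact Nat.cast_le.2 (by omega)

theorem Walk.not_isClique_neighborSet {x y v : V} (w : G.Walk x y)
    (hw : w.length = G.dist x y) (hv : v ∈ w.support) (hx : v ≠ x) (hy : v ≠ y) :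
    ¬G.IsClique (G.neighborSet v) := by
  classical
  intro hclique
  obtain ⟨a, hva, q₁, hq₁⟩ := Walk.exists_eq_cons_of_ne hx (w.takeUntil v hv).reverse
  obtain ⟨b, hvb, q₂, hq₂⟩ := Walk.exists_eq_cons_of_ne hy (w.dropUntil v hv)
  -- a shortcut from `a` to `b` skipping `v`
  obtain ⟨r, hr⟩ : ∃ r : G.Walk a b, r.length ≤ 1 := by
    by_cases hab : a = b
    · subst hab; exact ⟨.nil, by simp⟩
    · exact ⟨(hclique hva hvb hab).toWalk, by simp⟩
  have hsplit : w.length = q₁.length + q₂.length + 2 := by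
    rw [← w.take_spec hv, Walk.length_append, ← Walk.length_reverse (w.takeUntil v hv), hq₁,
      hq₂]
    simp only [Walk.length_cons]; omega
  have := G.dist_le (q₁.reverse.append (r.append q₂))
  simp only [Walk.length_append, Walk.length_reverse] at this
  omega

theorem IsStrongGeodeticSet.mem_of_isClique_neighborSet {S : Set V}
    (hS : G.IsStrongGeodeticSet S) {v : V} (hv : G.IsClique (G.neighborSet v)) : v ∈ S := by
  obtain ⟨g, hlen, hcover⟩ := hS
  obtain ⟨x, hx, y, hy, hvxy⟩ := hcover v
  by_contra hvS
  exact (g x hx y hy).not_isClique_neighborSet (hlen x hx y hy) hvxy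
    (by rintro rfl; exact hvS hx) (by rintro rfl; exact hvS hy) hv

theorem isStrongGeodeticSet_of_cover {S : Set V} (cover : V → V × V)
    (hcover : ∀ v, (cover v).1 ∈ S ∧ (cover v).2 ∈ S)
    (hgeod : ∀ x ∈ S, ∀ y ∈ S, ∃ w : G.Walk x y,
      w.length = G.dist x y ∧ ∀ v, cover v = (x, y) → v ∈ w.support) :
    G.IsStrongGeodeticSet S := by
  choose g hlen hsupp using hgeod
  exact ⟨g, hlen, fun v => ⟨_, (hcover v).1, _, (hcover v).2, hsupp _ _ _ _ v rfl⟩⟩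

theorem strongGeodeticNumber_eq_card [Fintype V] {S : Finset V}
    (hS : G.IsStrongGeodeticSet S) (hmin : ∀ T : Finset V, G.IsStrongGeodeticSet T → S ⊆ T) :
    G.strongGeodeticNumber = S.card :=
  le_antisymm (Nat.sInf_le ⟨S, hS, rfl⟩) <|
    le_csInf ⟨_, S, hS, rfl⟩ fun _ ⟨T, hT, hcard⟩ =>
      hcard ▸ Finset.card_le_card (hmin T hT)

end SimpleGraph

noncomputable def sgLowerBound (n d : ℕ) : ℕ :=
  ⌈((d : ℝ) - 3 + Real.sqrt (((d : ℝ) - 3) ^ 2 + 8 * (n : ℝ) * ((d : ℝ) - 1))) /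
    (2 * ((d : ℝ) - 1))⌉₊

theorem sgLowerBound_eq {k d : ℕ} (hk : 1 ≤ k) (hd : 2 ≤ d) :
    sgLowerBound (k + (d - 1) * k.choose 2) d = k := by
  have hdR : (2 : ℝ) ≤ d := by exact_mod_cast hd
  have hkR : (1 : ℝ) ≤ k := by exact_mod_cast hk
  have hn : ((k + (d - 1) * k.choose 2 : ℕ) : ℝ) = k + (d - 1) * (k * (k - 1) / 2) := by
    push_cast [Nat.cast_choose_two, Nat.cast_sub (by omega : 1 ≤ d)]
    ring
  -- the discriminant is a perfect square
  have hsq : ((d : ℝ) - 3) ^ 2 + 8 * (k + (d - 1) * (k * (k - 1) / 2)) * (d - 1) =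
      (2 * (d - 1) * k - (d - 3)) ^ 2 := by ring
  have hroot : 0 ≤ 2 * ((d : ℝ) - 1) * k - (d - 3) := by nlinarith
  have hquot : ((d : ℝ) - 3 + (2 * (d - 1) * k - (d - 3))) / (2 * (d - 1)) = k := by
    rw [div_eq_iff (ne_of_gt (by linarith))]
    ring
  rw [sgLowerBound, hn, hsq, Real.sqrt_sq hroot, hquot, Nat.ceil_natCast]

namespace SubdividedClique

abbrev Pair (k : ℕ) := {p : Fin k × Fin k // p.1 < p.2}

/-- `.inr (p, t)` is the vertex at distance `t` from `p.1.1` on the path of length `d` from the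
terminal `p.1.1` to the terminal `p.1.2`. -/
abbrev Vertex (k d : ℕ) := Fin k ⊕ (Pair k × Finset.Ioo 0 d)

variable {k d : ℕ}

def IsMid (d t : ℕ) : Prop := t = d / 2 ∨ t = d - d / 2

def Touches (d : ℕ) (c : Fin k) (p : Pair k) (t : ℕ) : Prop :=
  (p.1.1 = c ∧ t = 1) ∨ (p.1.2 = c ∧ t = d - 1)

def Rel : Vertex k d → Vertex k d → Prop
  | .inl c, .inr (p, t) => Touches d c p t
  | .inr (p, s), .inr (q, t) =>
      (p = q ∧ t.1 = s.1 + 1) ∨ (IsMid d s ∧ IsMid d t) ∨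
        ∃ c, Touches d c p s ∧ Touches d c q t
  | _, _ => False

def graph (k d : ℕ) : SimpleGraph (Vertex k d) := SimpleGraph.fromRel Rel

theorem adj_iff {x y : Vertex k d} : (graph k d).Adj x y ↔ x ≠ y ∧ (Rel x y ∨ Rel y x) :=
  SimpleGraph.fromRel_adj _ _ _

theorem card_pair (k : ℕ) : Fintype.card (Pair k) = k.choose 2 := by
  simpa [Fintype.card_subtype] using
    Finset.card_product_filter_lt (s := (Finset.univ : Finset (Fin k)))

theorem card_vertex (k d : ℕ) : Fintype.card (Vertex k d) = k + (d - 1) * k.choose 2 := by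
  rw [Fintype.card_sum, Fintype.card_prod, Fintype.card_fin, card_pair, Fintype.card_coe,
    Nat.card_Ioo, Nat.sub_zero, mul_comm]

def chain (p : Pair k) (t : ℕ) : Vertex k d :=
  if ht : t ∈ Finset.Ioo 0 d then .inr (p, ⟨t, ht⟩)
  else if t = 0 then .inl p.1.1 else .inl p.1.2

theorem chain_zero (p : Pair k) : (chain p 0 : Vertex k d) = .inl p.1.1 := by
  simp [chain]

theorem chain_last (hd : 0 < d) (p : Pair k) : (chain p d : Vertex k d) = .inl p.1.2 := by
  simp [chain, hd.ne']

theorem chain_of_mem (p : Pair k) {t : ℕ} (ht : t ∈ Finset.Ioo 0 d) :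
    (chain p t : Vertex k d) = .inr (p, ⟨t, ht⟩) := by
  simp [chain, ht]

theorem chain_adj_succ (hd : 2 ≤ d) (p : Pair k) {t : ℕ} (ht : t < d) :
    (graph k d).Adj (chain p t) (chain p (t + 1)) := by
  rcases Nat.eq_zero_or_pos t with rfl | htpos
  · rw [chain_zero, chain_of_mem p (Finset.mem_Ioo.2 ⟨by omega, by omega⟩), adj_iff]
    exact ⟨Sum.inl_ne_inr, Or.inl (Or.inl ⟨rfl, rfl⟩)⟩
  rw [chain_of_mem p (Finset.mem_Ioo.2 ⟨htpos, ht⟩), adj_iff]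
  rcases Nat.lt_or_ge (t + 1) d with hsucc | hsucc
  · rw [chain_of_mem p (Finset.mem_Ioo.2 ⟨by omega, hsucc⟩)]
    refine ⟨fun h => ?_, Or.inl (Or.inl ⟨rfl, rfl⟩)⟩
    simp at h
  · rw [show t + 1 = d by omega, chain_last (by omega)]
    exact ⟨Sum.inr_ne_inl, Or.inr (Or.inr ⟨rfl, by simp; omega⟩)⟩

theorem not_adj_inl_inl (a b : Fin k) : ¬(graph k d).Adj (.inl a) (.inl b) := by
  simp [adj_iff, Rel]

theorem adj_inl_inr_iff {c : Fin k} {p : Pair k} {t : Finset.Ioo 0 d} :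
    (graph k d).Adj (.inl c) (.inr (p, t)) ↔ Touches d c p t := by
  simp [adj_iff, Rel]

theorem isClique_neighborSet_inl (c : Fin k) :
    (graph k d).IsClique ((graph k d).neighborSet (.inl c)) := by
  rintro (a | ⟨p, s⟩) ha (b | ⟨q, t⟩) hb hab
  · exact absurd ha (not_adj_inl_inl c a)
  · exact absurd ha (not_adj_inl_inl c a)
  · exact absurd hb (not_adj_inl_inl c b)
  · rw [adj_iff]
    exact ⟨hab, Or.inl (Or.inr (Or.inr ⟨c, adj_inl_inr_iff.1 ha, adj_inl_inr_iff.1 hb⟩))⟩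

/-- A lower bound for the distance from the terminal `i`, exact on the paths through `i`. -/
def potential (i : Fin k) : Vertex k d → ℕ
  | .inl c => if c = i then 0 else d
  | .inr (p, t) => if p.1.1 = i then t.1 else if p.1.2 = i then d - t else d - min t.1 (d - t)

theorem potential_of_touches (i : Fin k) {c : Fin k} {p : Pair k} {t : Finset.Ioo 0 d}
    (h : Touches d c p t) : potential i (.inr (p, t)) = if c = i then 1 else d - 1 := by
  have hp : p.1.1 ≠ p.1.2 := p.2.ne
  have ht := Finset.mem_Ioo.1 t.2
  rcases h with ⟨rfl, h⟩ | ⟨rfl, h⟩ <;> simp only [potential] <;> split_ifs <;> simp_all <;>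
    omega

theorem potential_of_isMid (i : Fin k) (p : Pair k) {t : Finset.Ioo 0 d} (h : IsMid d t) :
    d / 2 ≤ potential i (.inr (p, t)) ∧ potential i (.inr (p, t)) ≤ d - d / 2 := by
  have ht := Finset.mem_Ioo.1 t.2
  unfold IsMid at h
  simp only [potential]
  split_ifs <;> omega

theorem potential_le_of_rel (i : Fin k) {x y : Vertex k d} (h : Rel x y) :
    potential i x ≤ potential i y + 1 ∧ potential i y ≤ potential i x + 1 := by
  match x, y, h with
  | .inl c, .inr (p, t), h =>
    rw [potential_of_touches i h]
    simp only [potential]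
    split_ifs <;> omega
  | .inr (p, s), .inr (q, t), .inl ⟨hpq, hst⟩ =>
    subst hpq
    have hs := Finset.mem_Ioo.1 s.2
    have ht := Finset.mem_Ioo.1 t.2
    simp only [potential]
    split_ifs <;> omega
  | .inr (p, s), .inr (q, t), .inr (.inl ⟨hs, ht⟩) =>
    have := potential_of_isMid i p hs
    have := potential_of_isMid i q ht
    omega
  | .inr (p, s), .inr (q, t), .inr (.inr ⟨c, hs, ht⟩) =>
    rw [potential_of_touches i hs, potential_of_touches i ht]
    omega

theorem potential_le_of_adj (i : Fin k) ⦃x y : Vertex k d⦄ (h : (graph k d).Adj x y) :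
    potential i y ≤ potential i x + 1 := by
  rcases (adj_iff.1 h).2 with h | h
  · exact (potential_le_of_rel i h).2
  · exact (potential_le_of_rel i h).1

theorem le_edist_inl_inl {i j : Fin k} (hij : i ≠ j) :
    (d : ℕ∞) ≤ (graph k d).edist (.inl i) (.inl j) := by
  simpa [potential, Ne.symm hij] using
    le_edist_of_forall_adj (potential_le_of_adj i) (.inl i) (.inl j)

theorem exists_walk_chain (hd : 2 ≤ d) (p : Pair k) :
    ∃ w : (graph k d).Walk (.inl p.1.1) (.inl p.1.2),
      w.length = d ∧ ∀ t, .inr (p, t) ∈ w.support := by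
  obtain ⟨w, hlen, hsupp⟩ :=
    exists_walk_of_adj_succ (chain p) d fun t ht => chain_adj_succ hd p ht
  refine ⟨w.copy (chain_zero p) (chain_last (by omega) p), by simpa using hlen, fun t => ?_⟩
  rw [Walk.support_copy, ← chain_of_mem p t.2]
  exact hsupp t (Finset.mem_Ioo.1 t.2).2.le

theorem edist_chain_le (hd : 2 ≤ d) (p : Pair k) {s u : ℕ} (hsu : s ≤ u) (hu : u ≤ d) :
    (graph k d).edist (chain p s) (chain p u) ≤ (u - s : ℕ) := by
  obtain ⟨w, hlen, -⟩ := exists_walk_of_adj_succ (fun t => (chain p (s + t) : Vertex k d))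
    (u - s) fun t ht => chain_adj_succ hd p (by omega)
  have := (graph k d).edist_le w
  rwa [hlen, add_zero, Nat.add_sub_cancel' hsu] at this

theorem edist_inl_inl (hd : 2 ≤ d) {i j : Fin k} (hij : i ≠ j) :
    (graph k d).edist (.inl i) (.inl j) = d := by
  refine le_antisymm ?_ (le_edist_inl_inl hij)
  wlog h : i < j generalizing i j
  · rw [SimpleGraph.edist_comm]
    exact this hij.symm (lt_of_le_of_ne (not_lt.1 h) hij.symm)
  obtain ⟨w, hlen, -⟩ := exists_walk_chain hd ⟨(i, j), h⟩
  exact ((graph k d).edist_le w).trans_eq (by rw [hlen])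

theorem dist_inl_inl (hd : 2 ≤ d) {i j : Fin k} (hij : i ≠ j) :
    (graph k d).dist (.inl i) (.inl j) = d := by
  rw [SimpleGraph.dist, edist_inl_inl hd hij, ENat.toNat_natCast]

theorem edist_le_one_of_isMid {p q : Pair k} {s t : Finset.Ioo 0 d} (hs : IsMid d s)
    (ht : IsMid d t) : (graph k d).edist (.inr (p, s)) (.inr (q, t)) ≤ 1 := by
  rw [SimpleGraph.edist_le_one_iff_adj_or_eq, adj_iff]
  by_cases h : (Sum.inr (p, s) : Vertex k d) = .inr (q, t)
  · exact .inr h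
  · exact .inl ⟨h, .inl (.inr (.inl ⟨hs, ht⟩))⟩

theorem exists_isMid_edist_inr_le (hd : 2 ≤ d) (p : Pair k) (t : Finset.Ioo 0 d) :
    ∃ s : Finset.Ioo 0 d, IsMid d s ∧
      (graph k d).edist (.inr (p, t)) (.inr (p, s)) ≤ (d / 2 - 1 : ℕ) := by
  have ht := Finset.mem_Ioo.1 t.2
  by_cases hle : t.1 ≤ d / 2
  · have hmid : d / 2 ∈ Finset.Ioo 0 d := Finset.mem_Ioo.2 ⟨by omega, by omega⟩
    refine ⟨⟨d / 2, hmid⟩, .inl rfl, ?_⟩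
    rw [← chain_of_mem p t.2, ← chain_of_mem p hmid]
    exact (edist_chain_le hd p hle (by omega)).trans (Nat.cast_le.2 (by omega))
  · have hmid : d - d / 2 ∈ Finset.Ioo 0 d := Finset.mem_Ioo.2 ⟨by omega, by omega⟩
    refine ⟨⟨d - d / 2, hmid⟩, .inr rfl, ?_⟩
    rw [← chain_of_mem p t.2, ← chain_of_mem p hmid, SimpleGraph.edist_comm]
    exact (edist_chain_le hd p (by omega) ht.2.le).trans (Nat.cast_le.2 (by omega))

theorem exists_isMid_edist_inl_le (hk : 2 ≤ k) (hd : 2 ≤ d) (i : Fin k) :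
    ∃ (p : Pair k) (s : Finset.Ioo 0 d), IsMid d s ∧
      (graph k d).edist (.inl i) (.inr (p, s)) ≤ (d / 2 : ℕ) := by
  have hmid : d / 2 ∈ Finset.Ioo 0 d := Finset.mem_Ioo.2 ⟨by omega, by omega⟩
  have hmid' : d - d / 2 ∈ Finset.Ioo 0 d := Finset.mem_Ioo.2 ⟨by omega, by omega⟩
  obtain ⟨j, hij⟩ : ∃ j : Fin k, i ≠ j := by
    by_cases h : i.1 = 0
    · exact ⟨⟨1, by omega⟩, fun h' => by simp [Fin.ext_iff, h] at h'⟩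
    · exact ⟨⟨0, by omega⟩, fun h' => h (by simp [h'])⟩
  rcases lt_or_gt_of_ne hij with h | h
  · refine ⟨⟨(i, j), h⟩, ⟨d / 2, hmid⟩, .inl rfl, ?_⟩
    rw [← chain_of_mem _ hmid]
    simpa [chain_zero] using edist_chain_le hd ⟨(i, j), h⟩ (Nat.zero_le (d / 2)) (by omega)
  · refine ⟨⟨(j, i), h⟩, ⟨d - d / 2, hmid'⟩, .inr rfl, ?_⟩
    rw [← chain_of_mem _ hmid', SimpleGraph.edist_comm]
    have := edist_chain_le hd ⟨(j, i), h⟩ (Nat.sub_le d (d / 2)) le_rfl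
    rwa [chain_last (by omega), Nat.sub_sub_self (Nat.div_le_self d 2)] at this

theorem edist_le_of_isMid {u v : Vertex k d} {p q : Pair k} {s t : Finset.Ioo 0 d}
    (hs : IsMid d s) (ht : IsMid d t) {a b : ℕ} (hu : (graph k d).edist u (.inr (p, s)) ≤ a)
    (hv : (graph k d).edist (.inr (q, t)) v ≤ b) : (graph k d).edist u v ≤ (a + 1 + b : ℕ) :=
  calc (graph k d).edist u v
      ≤ (graph k d).edist u (.inr (p, s)) + ((graph k d).edist (.inr (p, s)) (.inr (q, t)) +
          (graph k d).edist (.inr (q, t)) v) :=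
        (graph k d).edist_triangle.trans (add_le_add le_rfl (graph k d).edist_triangle)
    _ ≤ a + (1 + b) := by gcongr; exact edist_le_one_of_isMid hs ht
    _ = (a + 1 + b : ℕ) := by push_cast; ring

theorem edist_graph_le (hk : 2 ≤ k) (hd : 2 ≤ d) (u v : Vertex k d) :
    (graph k d).edist u v ≤ d := by
  have hcast : ∀ a b : ℕ, a + 1 + b ≤ d → ((a + 1 + b : ℕ) : ℕ∞) ≤ d := fun _ _ h =>
    Nat.cast_le.2 h
  rcases u with i | ⟨p, s⟩ <;> rcases v with j | ⟨q, t⟩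
  · rcases eq_or_ne i j with rfl | hij
    · simp
    · exact (edist_inl_inl hd hij).le
  · obtain ⟨p, s, hs, hu⟩ := exists_isMid_edist_inl_le hk hd i
    obtain ⟨t', ht', hv⟩ := exists_isMid_edist_inr_le hd q t
    rw [SimpleGraph.edist_comm] at hv
    exact (edist_le_of_isMid hs ht' hu hv).trans (hcast _ _ (by omega))
  · obtain ⟨s', hs', hu⟩ := exists_isMid_edist_inr_le hd p s
    obtain ⟨q, t, ht, hv⟩ := exists_isMid_edist_inl_le hk hd j
    rw [SimpleGraph.edist_comm] at hv
    exact (edist_le_of_isMid hs' ht hu hv).trans (hcast _ _ (by omega))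
  · obtain ⟨s', hs', hu⟩ := exists_isMid_edist_inr_le hd p s
    obtain ⟨t', ht', hv⟩ := exists_isMid_edist_inr_le hd q t
    rw [SimpleGraph.edist_comm] at hv
    exact (edist_le_of_isMid hs' ht' hu hv).trans (hcast _ _ (by omega))

theorem ediam_graph (hk : 2 ≤ k) (hd : 2 ≤ d) : (graph k d).ediam = d := by
  refine le_antisymm ((graph k d).ediam_le_of_edist_le (edist_graph_le hk hd)) ?_
  have h01 : (⟨0, by omega⟩ : Fin k) ≠ ⟨1, by omega⟩ := by simp
  exact (edist_inl_inl hd h01).symm.le.trans (graph k d).edist_le_ediam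

theorem diam_graph (hk : 2 ≤ k) (hd : 2 ≤ d) : (graph k d).diam = d := by
  rw [SimpleGraph.diam, ediam_graph hk hd, ENat.toNat_natCast]

theorem connected_graph (hk : 2 ≤ k) (hd : 2 ≤ d) : (graph k d).Connected :=
  have : Nonempty (Vertex k d) := ⟨.inl ⟨0, by omega⟩⟩
  (graph k d).connected_of_ediam_ne_top (by simp [ediam_graph hk hd])

def terminals (k d : ℕ) : Finset (Vertex k d) := Finset.univ.map Function.Embedding.inl

theorem mem_terminals {v : Vertex k d} : v ∈ terminals k d ↔ ∃ i, v = .inl i := by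
  simp [terminals, eq_comm]

def cover : Vertex k d → Vertex k d × Vertex k d
  | .inl c => (.inl c, .inl c)
  | .inr (p, _) => (.inl p.1.1, .inl p.1.2)

theorem isStrongGeodeticSet_terminals (hd : 2 ≤ d) :
    (graph k d).IsStrongGeodeticSet (terminals k d : Set (Vertex k d)) := by
  refine isStrongGeodeticSet_of_cover cover (fun v => ?_) ?_
  · rcases v with c | ⟨p, t⟩ <;> simp [cover, mem_terminals]
  rintro _ hx _ hy
  obtain ⟨i, rfl⟩ := mem_terminals.1 hx
  obtain ⟨j, rfl⟩ := mem_terminals.1 hy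
  rcases lt_trichotomy i j with h | rfl | h
  · obtain ⟨w, hlen, hsupp⟩ := exists_walk_chain hd ⟨(i, j), h⟩
    refine ⟨w, by rw [hlen, dist_inl_inl hd h.ne], ?_⟩
    rintro (c | ⟨p, t⟩) hv <;> simp only [cover, Prod.mk.injEq, Sum.inl.injEq] at hv
    · exact absurd (hv.1.symm.trans hv.2) h.ne
    · obtain rfl : p = ⟨(i, j), h⟩ := Subtype.ext (Prod.ext hv.1 hv.2)
      exact hsupp t
  · refine ⟨.nil, by simp, ?_⟩
    rintro (c | ⟨p, t⟩) hv <;> simp only [cover, Prod.mk.injEq, Sum.inl.injEq] at hv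
    · simp [hv.1]
    · exact absurd (hv.1.trans hv.2.symm) p.2.ne
  · obtain ⟨w, hlen, -⟩ := exists_walk_chain hd ⟨(j, i), h⟩
    refine ⟨w.reverse, ?_, ?_⟩
    · rw [Walk.length_reverse, hlen, dist_inl_inl hd h.ne']
    rintro (c | ⟨p, t⟩) hv <;> simp only [cover, Prod.mk.injEq, Sum.inl.injEq] at hv
    · exact absurd (hv.1.symm.trans hv.2) h.ne'
    · exact absurd (hv.1 ▸ hv.2 ▸ p.2) h.asymm

theorem terminals_subset {T : Finset (Vertex k d)}
    (hT : (graph k d).IsStrongGeodeticSet (T : Set (Vertex k d))) : terminals k d ⊆ T := by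
  intro v hv
  obtain ⟨i, rfl⟩ := mem_terminals.1 hv
  exact hT.mem_of_isClique_neighborSet (isClique_neighborSet_inl i)

theorem strongGeodeticNumber_graph (hd : 2 ≤ d) : (graph k d).strongGeodeticNumber = k := by
  rw [strongGeodeticNumber_eq_card (isStrongGeodeticSet_terminals hd) fun _ => terminals_subset]
  simp [terminals]

end SubdividedClique

/-- For all `k ≥ 2` and `d ≥ 2` there is a finite connected graph with diameter `d`,
strong geodetic number `k`, and `k + (d-1)·C(k,2)` vertices, attaining equality in
the bound `sg(G) ≥ ⌈(d - 3 + √((d-3)² + 8·n(G)·(d-1)))/(2(d-1))⌉`. -/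
theorem exists_diam_d_extremal (k d : ℕ) (hk : 2 ≤ k) (hd : 2 ≤ d) :
    ∃ (V : Type) (inst : Fintype V) (G : SimpleGraph V),
      G.Connected ∧ G.diam = d ∧
      @SimpleGraph.strongGeodeticNumber V inst G = k ∧
      @Fintype.card V inst = k + (d - 1) * k.choose 2 ∧
      @SimpleGraph.strongGeodeticNumber V inst G =
        ⌈((d : ℝ) - 3 +
            Real.sqrt (((d : ℝ) - 3) ^ 2 +
              8 * (@Fintype.card V inst : ℝ) * ((d : ℝ) - 1))) /
          (2 * ((d : ℝ) - 1))⌉₊ := by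
  refine ⟨SubdividedClique.Vertex k d, inferInstance, SubdividedClique.graph k d,
    SubdividedClique.connected_graph hk hd, SubdividedClique.diam_graph hk hd,
    SubdividedClique.strongGeodeticNumber_graph hd, SubdividedClique.card_vertex k d, ?_⟩
  rw [SubdividedClique.strongGeodeticNumber_graph hd, SubdividedClique.card_vertex]
  exact (sgLowerBound_eq (by omega) hd).symm
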